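/- arXiv:2308.14127 — 2 statements merged into one kernel-verified Lean document; each statement's English description precedes it below -/
import Mathlib

section
/- Method of characteristics for Burgers' equation: let u₀ : ℝ → ℝ be C¹ and let T > 0 be such that 1 + t u₀'(x) > 0 for all x ∈ ℝ and t ∈ [0,T), and such that Φ_t(x) := x + t u₀(x) is a bijection of ℝ for each t ∈ [0,T). Then u(Φ_t(x), t) := u₀(x) defines a C¹ function u on ℝ × [0,T) satisfying ∂_t u + u ∂_x u = 0 with u(·,0) = u₀. -/
/-!
The characteristic map `Ψ (x, t) = (x + t u₀ x, t)` is `C¹` with derivative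
`(h, k) ↦ ((1 + t u₀' x) h + u₀ x k, k)`, invertible where `1 + t u₀' x ≠ 0`. By the inverse
function theorem its local inverses are `C¹`; as `Ψ` is injective on `ℝ × [0, T)` and preserves
that set, they agree there with the global inverse, so `u = u₀ ∘ fst ∘ Ψ⁻¹` is `C¹`. Since `u` is
constant along each characteristic line `τ ↦ (x + τ u₀ x, τ)`, its derivative in the direction
`(u₀ x, 1) = (u, 1)` vanishes, which is Burgers' equation.
-/

open Function Set Filter Topology

theorem ContDiffAt.contDiffWithinAt_of_injOn_of_rightInvOn
    {𝕜 E F : Type*} [RCLike 𝕜] [NormedAddCommGroup E] [NormedSpace 𝕜 E] [CompleteSpace E]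
    [NormedAddCommGroup F] [NormedSpace 𝕜 F] {f : E → F} {f' : E ≃L[𝕜] F} {g : F → E}
    {s : Set E} {t : Set F} {a : E} {n : WithTop ℕ∞}
    (hf : ContDiffAt 𝕜 n f a) (hf' : HasFDerivAt f (f' : E →L[𝕜] F) a) (hn : n ≠ 0)
    (hinj : InjOn f s) (hpre : f ⁻¹' t ⊆ s) (hfg : RightInvOn g f t) (ha : f a ∈ t) :
    ContDiffWithinAt 𝕜 n g t (f a) := by
  have hloc : ∀ᶠ q in 𝓝 (f a), f (hf.localInverse hf' hn q) = q :=
    (hf.hasStrictFDerivAt' hf' hn).eventually_right_inverse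
  refine (hf.to_localInverse hf' hn).contDiffWithinAt.congr_of_eventuallyEq_of_mem ?_ ha
  filter_upwards [nhdsWithin_le_nhds hloc, self_mem_nhdsWithin] with q hq hqt
  -- `g q` and the local inverse at `q` are both `f`-preimages of `q ∈ t`, hence lie in `s`.
  exact hinj (hpre (show f (g q) ∈ t by rwa [hfg hqt])) (hpre (show f _ ∈ t by rwa [hq]))
    (by rw [hfg hqt, hq])

theorem deriv_add_mul_deriv_eq_zero_of_eventually_const {U : ℝ → ℝ → ℝ} {y t c : ℝ}
    (hU : DifferentiableAt ℝ (fun p : ℝ × ℝ => U p.1 p.2) (y, t))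
    (hconst : ∀ᶠ τ in 𝓝 t, U (y + (τ - t) * c) τ = U y t) :
    deriv (fun τ => U y τ) t + c * deriv (fun z => U z t) y = 0 := by
  set L := fderiv ℝ (fun p : ℝ × ℝ => U p.1 p.2) (y, t)
  have hU' := hU.hasFDerivAt
  have h_t : HasDerivAt (fun τ => U y τ) (L (0, 1)) t :=
    hU'.comp_hasDerivAt t ((hasDerivAt_const t y).prodMk (hasDerivAt_id t))
  have h_x : HasDerivAt (fun z => U z t) (L (1, 0)) y :=
    hU'.comp_hasDerivAt_of_eq y ((hasDerivAt_id' y).prodMk (hasDerivAt_const y t)) rfl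
  have h_line : HasDerivAt (fun τ => U (y + (τ - t) * c) τ) (L (c, 1)) t := by
    have hγ : HasDerivAt (fun τ : ℝ => (y + (τ - t) * c, τ)) (c, 1) t := by
      simpa using ((((hasDerivAt_id' t).sub_const t).mul_const c).const_add y).prodMk
        (hasDerivAt_id' t)
    exact hU'.comp_hasDerivAt_of_eq t hγ (by simp)
  have h_zero : L (c, 1) = 0 :=
    h_line.unique ((hasDerivAt_const t (U y t)).congr_of_eventuallyEq hconst)
  have h_split : L (c, 1) = c * L (1, 0) + L (0, 1) := by
    rw [show ((c, 1) : ℝ × ℝ) = c • ((1, 0) : ℝ × ℝ) + (0, 1) by ext <;> simp, map_add, map_smul,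
      smul_eq_mul]
  rw [h_t.deriv, h_x.deriv]
  linarith

namespace Burgers

/-- The linear map `(h, k) ↦ (a h + b k, k)`. -/
noncomputable def shearEquiv (a b : ℝ) (ha : a ≠ 0) : (ℝ × ℝ) ≃L[ℝ] (ℝ × ℝ) :=
  ContinuousLinearEquiv.equivOfInverse
    ((a • ContinuousLinearMap.fst ℝ ℝ ℝ + b • ContinuousLinearMap.snd ℝ ℝ ℝ).prod
      (ContinuousLinearMap.snd ℝ ℝ ℝ))
    ((a⁻¹ • (ContinuousLinearMap.fst ℝ ℝ ℝ - b • ContinuousLinearMap.snd ℝ ℝ ℝ)).prod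
      (ContinuousLinearMap.snd ℝ ℝ ℝ))
    (fun p => by ext <;> simp; field_simp)
    (fun p => by ext <;> simp; field_simp; ring)

variable (u₀ : ℝ → ℝ)

def characteristicMap (p : ℝ × ℝ) : ℝ × ℝ := (p.1 + p.2 * u₀ p.1, p.2)

noncomputable def characteristicFoot (y t : ℝ) : ℝ := invFun (fun x => x + t * u₀ x) y

noncomputable def solution (y t : ℝ) : ℝ := u₀ (characteristicFoot u₀ y t)

variable {u₀}

theorem characteristicFoot_add_mul {t : ℝ} (h : Surjective fun x => x + t * u₀ x) (y : ℝ) :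
    characteristicFoot u₀ y t + t * u₀ (characteristicFoot u₀ y t) = y :=
  invFun_eq (h y)

theorem characteristicFoot_eq {x y t : ℝ} (h : Injective fun x => x + t * u₀ x)
    (hxy : x + t * u₀ x = y) : characteristicFoot u₀ y t = x := by
  subst hxy
  exact leftInverse_invFun h x

theorem characteristicFoot_zero (y : ℝ) : characteristicFoot u₀ y 0 = y :=
  characteristicFoot_eq (fun a b h => by simpa using h) (by simp)

theorem contDiff_characteristicMap {n : WithTop ℕ∞} (hu : ContDiff ℝ n u₀) :
    ContDiff ℝ n (characteristicMap u₀) :=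
  (contDiff_fst.add (contDiff_snd.mul (hu.comp contDiff_fst))).prodMk contDiff_snd

theorem hasFDerivAt_characteristicMap {x t u' : ℝ} (hu : HasDerivAt u₀ u' x)
    (ha : 1 + t * u' ≠ 0) :
    HasFDerivAt (characteristicMap u₀) (shearEquiv (1 + t * u') (u₀ x) ha : (ℝ × ℝ) →L[ℝ] ℝ × ℝ)
      (x, t) := by
  have hfst := hasFDerivAt_fst (𝕜 := ℝ) (p := (x, t))
  refine (((hfst.add (hasFDerivAt_snd.mul (hu.hasFDerivAt.comp _ hfst))).prodMk
    hasFDerivAt_snd)).congr_fderiv ?_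
  ext <;> simp [shearEquiv]

theorem contDiffOn_characteristicFoot {n : WithTop ℕ∞} {I : Set ℝ} (hn : n ≠ 0)
    (hu : ContDiff ℝ n u₀) (hne : ∀ x, ∀ t ∈ I, 1 + t * deriv u₀ x ≠ 0)
    (hbij : ∀ t ∈ I, Bijective fun x => x + t * u₀ x) :
    ContDiffOn ℝ n (fun q : ℝ × ℝ => characteristicFoot u₀ q.1 q.2) (univ ×ˢ I) := by
  set S : Set (ℝ × ℝ) := univ ×ˢ I
  have hinv : RightInvOn (fun q : ℝ × ℝ => (characteristicFoot u₀ q.1 q.2, q.2))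
      (characteristicMap u₀) S := fun q hq =>
    Prod.ext (characteristicFoot_add_mul (hbij q.2 hq.2).surjective q.1) rfl
  have hinj : InjOn (characteristicMap u₀) S := by
    rintro ⟨x, t⟩ ⟨-, ht⟩ ⟨x', t'⟩ - h
    obtain ⟨hx, rfl⟩ := Prod.ext_iff.mp h
    exact Prod.ext ((hbij t ht).injective hx) rfl
  intro q hq
  have hq' := hinv hq
  rw [← hq']
  exact ((contDiff_characteristicMap hu).contDiffAt.contDiffWithinAt_of_injOn_of_rightInvOn
    (hasFDerivAt_characteristicMap ((hu.differentiable hn) _).hasDerivAt (hne _ q.2 hq.2)) hn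
    hinj (fun p hp => ⟨trivial, hp.2⟩) hinv (hq'.symm ▸ hq)).fst

theorem solution_add_mul {x t : ℝ} (h : Injective fun x => x + t * u₀ x) :
    solution u₀ (x + t * u₀ x) t = u₀ x := by
  rw [solution, characteristicFoot_eq h rfl]

theorem solution_zero (y : ℝ) : solution u₀ y 0 = u₀ y := by
  rw [solution, characteristicFoot_zero]

theorem solution_along_characteristic {y t τ : ℝ} (ht : Surjective fun x => x + t * u₀ x)
    (hτ : Injective fun x => x + τ * u₀ x) :
    solution u₀ (y + (τ - t) * solution u₀ y t) τ = solution u₀ y t := by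
  set x := characteristicFoot u₀ y t
  have hy : x + t * u₀ x = y := characteristicFoot_add_mul ht y
  have hline : y + (τ - t) * solution u₀ y t = x + τ * u₀ x := by
    change y + (τ - t) * u₀ x = x + τ * u₀ x
    linear_combination -hy
  rw [hline, solution_add_mul hτ, solution]

end Burgers

theorem burgers_characteristics_general (u₀ : ℝ → ℝ) (hu₀ : ContDiff ℝ 1 u₀)
    (T : ℝ)
    (hpos : ∀ x : ℝ, ∀ t ∈ Set.Ico (0 : ℝ) T, 0 < 1 + t * deriv u₀ x)
    (hbij : ∀ t ∈ Set.Ico (0 : ℝ) T, Function.Bijective (fun x : ℝ => x + t * u₀ x)) :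
    ∃ u : ℝ → ℝ → ℝ,
      (∀ x : ℝ, ∀ t ∈ Set.Ico (0 : ℝ) T, u (x + t * u₀ x) t = u₀ x) ∧
      (∀ y : ℝ, u y 0 = u₀ y) ∧
      ContDiffOn ℝ 1 (fun p : ℝ × ℝ => u p.1 p.2) (Set.univ ×ˢ Set.Ico (0 : ℝ) T) ∧
      (∀ y : ℝ, ∀ t ∈ Set.Ioo (0 : ℝ) T,
        deriv (fun τ => u y τ) t + u y t * deriv (fun z => u z t) y = 0) := by
  have hC : ContDiffOn ℝ 1 (fun p : ℝ × ℝ => Burgers.solution u₀ p.1 p.2)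
      (univ ×ˢ Ico 0 T) :=
    hu₀.comp_contDiffOn <| Burgers.contDiffOn_characteristicFoot one_ne_zero hu₀
      (fun x t ht => (hpos x t ht).ne') hbij
  refine ⟨Burgers.solution u₀, fun x t ht => Burgers.solution_add_mul (hbij t ht).injective,
    Burgers.solution_zero, hC, fun y t ht => ?_⟩
  have hS : univ ×ˢ Ico 0 T ∈ 𝓝 (y, t) := prod_mem_nhds univ_mem (Ico_mem_nhds ht.1 ht.2)
  refine deriv_add_mul_deriv_eq_zero_of_eventually_const
    ((hC.contDiffAt hS).differentiableAt one_ne_zero) ?_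
  filter_upwards [Ioo_mem_nhds ht.1 ht.2] with τ hτ
  exact Burgers.solution_along_characteristic (hbij t (Ioo_subset_Ico_self ht)).surjective
    (hbij τ (Ioo_subset_Ico_self hτ)).injective

/-- Method of characteristics for Burgers' equation: if the characteristic maps
`Φ_t(x) = x + t u₀(x)` are bijections with positive spatial derivative on `[0, T)`,
then `u(Φ_t(x), t) := u₀(x)` defines a `C¹` solution of `∂ₜu + u ∂ₓu = 0` with
initial data `u₀`. -/
theorem burgers_characteristics (u₀ : ℝ → ℝ) (hu₀ : ContDiff ℝ 1 u₀)
    (T : ℝ) (hT : 0 < T)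
    (hpos : ∀ x : ℝ, ∀ t ∈ Set.Ico (0 : ℝ) T, 0 < 1 + t * deriv u₀ x)
    (hbij : ∀ t ∈ Set.Ico (0 : ℝ) T, Function.Bijective (fun x : ℝ => x + t * u₀ x)) :
    ∃ u : ℝ → ℝ → ℝ,
      (∀ x : ℝ, ∀ t ∈ Set.Ico (0 : ℝ) T, u (x + t * u₀ x) t = u₀ x) ∧
      (∀ y : ℝ, u y 0 = u₀ y) ∧
      ContDiffOn ℝ 1 (fun p : ℝ × ℝ => u p.1 p.2) (Set.univ ×ˢ Set.Ico (0 : ℝ) T) ∧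
      (∀ y : ℝ, ∀ t ∈ Set.Ioo (0 : ℝ) T,
        deriv (fun τ => u y τ) t + u y t * deriv (fun z => u z t) y = 0) :=
  burgers_characteristics_general u₀ hu₀ T hpos hbij
end

section
/- Leading-order expansion of the regularized flux: let H_{ρ^{-1}} be as above with α > 0 and suppose g is smooth. Then the solution F of H_{ρ^{-1}}F = g satisfies F = ρ g + O(α) in the sense that ‖F − ρg‖_{L²} ≤ α K for a constant K depending on bounds for ρ, its derivatives, and g, uniformly as α → 0. -/
open MeasureTheory Filter Set

set_option maxHeartbeats 1000000


/-- On an interval, `∫ |u| ≤ ((b-a)t + U/t)/2` where `U` bounds `∫ u²`. -/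
lemma aux_int_abs_le (u : ℝ → ℝ) (hu : Continuous u) (U : ℝ)
    (hU : ∀ a b : ℝ, a ≤ b → ∫ x in a..b, u x ^ 2 ≤ U)
    (a b t : ℝ) (hab : a ≤ b) (ht : 0 < t) :
    ∫ x in a..b, |u x| ≤ ((b - a) * t + U / t) / 2 := by
  have h1 : ∀ x, |u x| ≤ (t + u x ^ 2 / t) / 2 := by
    intro x
    have h2 : 0 ≤ (|u x| - t) ^ 2 := sq_nonneg _
    have h3 : u x ^ 2 = |u x| ^ 2 := (sq_abs _).symm
    rw [le_div_iff₀ two_pos, h3, add_div' _ _ _ ht.ne', le_div_iff₀ ht]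
    nlinarith [abs_nonneg (u x)]
  have hint1 : IntervalIntegrable (fun x => |u x|) volume a b := (hu.abs).intervalIntegrable _ _
  have hint2 : IntervalIntegrable (fun x => (t + u x ^ 2 / t) / 2) volume a b :=
    (((continuous_const.add ((hu.pow 2).div_const t)).div_const 2)).intervalIntegrable _ _
  calc ∫ x in a..b, |u x| ≤ ∫ x in a..b, (t + u x ^ 2 / t) / 2 :=
        intervalIntegral.integral_mono_on hab hint1 hint2 (fun x _ => h1 x)
    _ = ((∫ x in a..b, (t : ℝ)) + (∫ x in a..b, u x ^ 2) / t) / 2 := by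
        rw [intervalIntegral.integral_div, intervalIntegral.integral_add (g := fun x => u x ^ 2 / t)
          (intervalIntegrable_const) (((hu.pow 2).div_const t).intervalIntegrable _ _),
          intervalIntegral.integral_div]
    _ ≤ ((b - a) * t + U / t) / 2 := by
        rw [intervalIntegral.integral_const, smul_eq_mul]
        have h4 : (∫ x in a..b, u x ^ 2) / t ≤ U / t := (div_le_div_iff_of_pos_right ht).mpr (hU a b hab)
        linarith

/-- FTC-based bound on `|v b - v a|`. -/
lemma aux_vbound (v dv u h : ℝ → ℝ) (hdvc : Continuous dv) (huc : Continuous u)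
    (hhc : Continuous h)
    (hv : ∀ x : ℝ, HasDerivAt v (dv x) x)
    (c1 : ℝ) (hc1 : 0 ≤ c1)
    (hdv : ∀ x, |dv x| ≤ c1 * |u x| + |h x|)
    (U Ih : ℝ)
    (hU : ∀ a b : ℝ, a ≤ b → ∫ x in a..b, u x ^ 2 ≤ U)
    (hIh : ∀ a b : ℝ, a ≤ b → ∫ x in a..b, |h x| ≤ Ih)
    (a b t : ℝ) (hab : a ≤ b) (ht : 0 < t) :
    |v b - v a| ≤ c1 * (((b - a) * t + U / t) / 2) + Ih := by
  have hftc : ∫ x in a..b, dv x = v b - v a :=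
    intervalIntegral.integral_eq_sub_of_hasDerivAt (fun x _ => hv x)
      (hdvc.intervalIntegrable _ _)
  rw [← hftc]
  calc |∫ x in a..b, dv x| ≤ ∫ x in a..b, |dv x| :=
        intervalIntegral.abs_integral_le_integral_abs hab
    _ ≤ ∫ x in a..b, (c1 * |u x| + |h x|) :=
        intervalIntegral.integral_mono_on hab ((hdvc.abs).intervalIntegrable _ _)
          (((continuous_const.mul huc.abs).add hhc.abs).intervalIntegrable _ _) (fun x _ => hdv x)
    _ = c1 * (∫ x in a..b, |u x|) + ∫ x in a..b, |h x| := by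
        rw [intervalIntegral.integral_add (f := fun x => c1 * |u x|) ((continuous_const.mul huc.abs).intervalIntegrable _ _)
          ((hhc.abs).intervalIntegrable _ _), intervalIntegral.integral_const_mul]
    _ ≤ c1 * (((b - a) * t + U / t) / 2) + Ih := by
        have h1 := aux_int_abs_le u huc U hU a b t hab ht
        have h2 := hIh a b hab
        have h3 := mul_le_mul_of_nonneg_left h1 hc1
        linarith

/-- Existence of a sequence `bₙ → ∞` along which the boundary term `v·u` vanishes. -/
lemma aux_bdry_seq (u v : ℝ → ℝ) (hu : Continuous u)
    (hIu : Integrable (fun x => u x ^ 2))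
    (K1 K2 : ℝ) (hK1 : 0 ≤ K1) (hK2 : 0 ≤ K2)
    (hvb : ∀ b : ℝ, 1 ≤ b → |v b| ≤ K1 + K2 * Real.sqrt b) :
    ∃ b : ℕ → ℝ, Tendsto b atTop atTop ∧ (∀ n, 1 ≤ b n) ∧
      Tendsto (fun n => v (b n) * u (b n)) atTop (nhds 0) := by
  have hN : ∀ n : ℕ, ∃ x ∈ Icc ((n : ℝ) + 1) (2 * ((n : ℝ) + 1)),
      IsMinOn (fun y => u y ^ 2) (Icc ((n : ℝ) + 1) (2 * ((n : ℝ) + 1))) x := by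
    intro n
    have hle : (n : ℝ) + 1 ≤ 2 * ((n : ℝ) + 1) := by
      have : (0:ℝ) ≤ (n : ℝ) := Nat.cast_nonneg n
      linarith
    exact isCompact_Icc.exists_isMinOn ⟨_, left_mem_Icc.mpr hle⟩ ((hu.pow 2).continuousOn)
  choose b hbmem hbmin using hN
  have hNpos : ∀ n : ℕ, (1 : ℝ) ≤ (n : ℝ) + 1 := fun n => by
    have : (0:ℝ) ≤ (n : ℝ) := Nat.cast_nonneg n
    linarith
  have hb1 : ∀ n, 1 ≤ b n := fun n => le_trans (hNpos n) (hbmem n).1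
  have hbtop : Tendsto b atTop atTop := by
    apply tendsto_atTop_mono (fun n => (hbmem n).1)
    exact tendsto_atTop_add_const_right _ 1 tendsto_natCast_atTop_atTop
  refine ⟨b, hbtop, hb1, ?_⟩
  set T : ℕ → ℝ := fun n => ∫ x in ((n : ℝ) + 1)..(2 * ((n : ℝ) + 1)), u x ^ 2 with hT
  have hle : ∀ n : ℕ, (n : ℝ) + 1 ≤ 2 * ((n : ℝ) + 1) := by
    intro n; have := hNpos n; linarith
  have hT0 : ∀ n, 0 ≤ T n := fun n =>
    intervalIntegral.integral_nonneg (hle n) (fun x _ => sq_nonneg _)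
  have hmin : ∀ n : ℕ, ((n : ℝ) + 1) * u (b n) ^ 2 ≤ T n := by
    intro n
    have h1 : ∫ x in ((n : ℝ) + 1)..(2 * ((n : ℝ) + 1)), u (b n) ^ 2 ≤ T n :=
      intervalIntegral.integral_mono_on (hle n) intervalIntegrable_const
        ((hu.pow 2).intervalIntegrable _ _) (fun x hx => hbmin n hx)
    rw [intervalIntegral.integral_const, smul_eq_mul] at h1
    have : 2 * ((n : ℝ) + 1) - ((n : ℝ) + 1) = (n : ℝ) + 1 := by ring
    rwa [this] at h1
  have hTtend : Tendsto T atTop (nhds 0) := by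
    have ht1 : Tendsto (fun n : ℕ => (n : ℝ) + 1) atTop atTop :=
      tendsto_atTop_add_const_right _ 1 tendsto_natCast_atTop_atTop
    have ht2 : Tendsto (fun n : ℕ => 2 * ((n : ℝ) + 1)) atTop atTop :=
      ht1.const_mul_atTop (by norm_num)
    have l1 := MeasureTheory.intervalIntegral_tendsto_integral_Ioi 0
      (hIu.integrableOn) ht1
    have l2 := MeasureTheory.intervalIntegral_tendsto_integral_Ioi 0
      (hIu.integrableOn) ht2
    have heq : T = fun n : ℕ => (∫ x in (0:ℝ)..(2 * ((n : ℝ) + 1)), u x ^ 2) -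
        ∫ x in (0:ℝ)..((n : ℝ) + 1), u x ^ 2 := by
      funext n
      have := intervalIntegral.integral_add_adjacent_intervals
        (a := (0:ℝ)) (b := (n : ℝ) + 1) (c := 2 * ((n : ℝ) + 1)) (μ := volume)
        (f := fun x => u x ^ 2)
        ((hu.pow 2).intervalIntegrable _ _) ((hu.pow 2).intervalIntegrable _ _)
      simp only [hT]
      linarith
    rw [heq]
    have := l2.sub l1
    simpa using this
  have hsq2 : Real.sqrt 2 ≤ 2 := by
    nlinarith [Real.sq_sqrt (by norm_num : (0:ℝ) ≤ 2), Real.sqrt_nonneg 2]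
  have hbound : ∀ n, |v (b n) * u (b n)| ≤ (K1 + 2 * K2) * Real.sqrt (T n) := by
    intro n
    set N : ℝ := (n : ℝ) + 1 with hNdef
    have hN1 : 1 ≤ N := hNpos n
    set s : ℝ := Real.sqrt (T n) with hs
    set r : ℝ := Real.sqrt N with hr
    have hr1 : 1 ≤ r := Real.one_le_sqrt.mpr hN1
    have hs0 : 0 ≤ s := Real.sqrt_nonneg _
    have hu1 : |u (b n)| * r ≤ s := by
      have h1 : Real.sqrt (u (b n) ^ 2 * N) ≤ s := by
        apply Real.sqrt_le_sqrt
        have := hmin n; nlinarith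
      rwa [Real.sqrt_mul (sq_nonneg _), Real.sqrt_sq_eq_abs] at h1
    have hus : |u (b n)| ≤ s := by nlinarith [abs_nonneg (u (b n))]
    have hv1 : |v (b n)| ≤ K1 + K2 * (Real.sqrt 2 * r) := by
      have h1 := hvb (b n) (hb1 n)
      have h2 : Real.sqrt (b n) ≤ Real.sqrt 2 * r := by
        rw [hr, ← Real.sqrt_mul (by norm_num : (0:ℝ) ≤ 2)]
        exact Real.sqrt_le_sqrt (hbmem n).2
      nlinarith [Real.sqrt_nonneg (b n)]
    rw [abs_mul]
    have hsr2 : Real.sqrt 2 * r * |u (b n)| ≤ 2 * s := by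
      have h3 : Real.sqrt 2 * (r * |u (b n)|) ≤ Real.sqrt 2 * s := by
        apply mul_le_mul_of_nonneg_left _ (Real.sqrt_nonneg 2)
        rw [mul_comm]; exact hu1
      nlinarith [Real.sqrt_nonneg 2]
    calc |v (b n)| * |u (b n)| ≤ (K1 + K2 * (Real.sqrt 2 * r)) * |u (b n)| :=
          mul_le_mul_of_nonneg_right hv1 (abs_nonneg _)
      _ = K1 * |u (b n)| + K2 * (Real.sqrt 2 * r * |u (b n)|) := by ring
      _ ≤ K1 * s + K2 * (2 * s) := by
          have := mul_le_mul_of_nonneg_left hsr2 hK2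
          have := mul_le_mul_of_nonneg_left hus hK1
          linarith
      _ = (K1 + 2 * K2) * s := by ring
  apply squeeze_zero_norm (fun n => by simpa [Real.norm_eq_abs, abs_mul] using hbound n)
  have : Tendsto (fun n => Real.sqrt (T n)) atTop (nhds 0) := by
    have := (Real.continuous_sqrt.tendsto 0).comp hTtend
    simpa [Function.comp_def] using this
  simpa using this.const_mul (K1 + 2 * K2)

lemma aux_deriv_contDiff {f : ℝ → ℝ} (hf : ContDiff ℝ (⊤ : ℕ∞) f) : ContDiff ℝ (⊤ : ℕ∞) (deriv f) := by
  rw [show ((⊤ : ℕ∞) : WithTop ℕ∞) = ((⊤ : ℕ∞) : WithTop ℕ∞) + 1 from rfl] at hf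
  exact (contDiff_succ_iff_deriv.mp hf).2.2

/-- Leading-order expansion of the regularized flux: any smooth `L²` solution `F` of
`H_{ρ⁻¹} F = g`, i.e. `ρ⁻¹F − α(ρ⁻¹F')' = g`, satisfies `‖F − ρg‖_{L²} ≤ αK` for a
constant `K` independent of `α ∈ (0, 1]`. -/
theorem regularized_flux_leading_order
    (ρ : ℝ → ℝ) (hρ : ContDiff ℝ (⊤ : ℕ∞) ρ) (c C : ℝ) (hc : 0 < c)
    (hbound : ∀ x, c ≤ ρ x ∧ ρ x ≤ C)
    (hd1 : ∀ x, |deriv ρ x| ≤ C) (hd2 : ∀ x, |deriv (deriv ρ) x| ≤ C)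
    (g : ℝ → ℝ) (hg : ContDiff ℝ (⊤ : ℕ∞) g) (hgc : HasCompactSupport g) :
    ∃ K : ℝ, ∀ α : ℝ, 0 < α → α ≤ 1 → ∀ F : ℝ → ℝ, ContDiff ℝ (⊤ : ℕ∞) F →
      MeasureTheory.MemLp F 2 (volume : Measure ℝ) →
      (∀ x : ℝ, (ρ x)⁻¹ * F x - α * deriv (fun y => (ρ y)⁻¹ * deriv F y) x = g x) →
      Real.sqrt (∫ x, (F x - ρ x * g x) ^ 2) ≤ α * K := by
  classical
  have hρpos : ∀ x, 0 < ρ x := fun x => lt_of_lt_of_le hc (hbound x).1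
  have hρne : ∀ x, ρ x ≠ 0 := fun x => (hρpos x).ne'
  have hCpos : 0 < C := lt_of_lt_of_le (hρpos 0) (hbound 0).2
  have hρinv : ContDiff ℝ (⊤ : ℕ∞) fun x => (ρ x)⁻¹ := hρ.inv hρne
  have hρinvpos : ∀ x, 0 < (ρ x)⁻¹ := fun x => inv_pos.mpr (hρpos x)
  have hρinvle : ∀ x, (ρ x)⁻¹ ≤ c⁻¹ := fun x => inv_anti₀ hc (hbound x).1
  -- the compactly supported profile P = ρ g, its flux w, and the forcing h
  set P : ℝ → ℝ := fun x => ρ x * g x with hPdef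
  have hPc : ContDiff ℝ (⊤ : ℕ∞) P := hρ.mul hg
  have hPsupp : HasCompactSupport P := hgc.mul_left
  have hPderivc : ContDiff ℝ (⊤ : ℕ∞) (deriv P) := aux_deriv_contDiff hPc
  set w : ℝ → ℝ := fun x => (ρ x)⁻¹ * deriv P x with hwdef
  have hwc : ContDiff ℝ (⊤ : ℕ∞) w := hρinv.mul hPderivc
  have hwsupp : HasCompactSupport w := (hPsupp.deriv).mul_left
  set h : ℝ → ℝ := deriv w with hhdef
  have hhc : ContDiff ℝ (⊤ : ℕ∞) h := aux_deriv_contDiff hwc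
  have hhsupp : HasCompactSupport h := hwsupp.deriv
  have hhcont : Continuous h := hhc.continuous
  -- integrability facts for h
  have Ih2 : Integrable (fun x => h x ^ 2) := by
    have hs : HasCompactSupport (fun x => h x ^ 2) := by
      exact hhsupp.comp_left (g := fun y : ℝ => y ^ 2) (by norm_num)
    exact (hhcont.pow 2).integrable_of_hasCompactSupport hs
  have Ihabs : Integrable (fun x => |h x|) :=
    hhcont.abs.integrable_of_hasCompactSupport hhsupp.abs
  have hIh2nonneg : (0:ℝ) ≤ ∫ x, h x ^ 2 := integral_nonneg fun x => sq_nonneg _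
  refine ⟨C * Real.sqrt (∫ x, h x ^ 2), ?_⟩
  intro α hα hα1 F hF hF2 hEq
  set vF : ℝ → ℝ := fun y => (ρ y)⁻¹ * deriv F y with hvFdef
  set u : ℝ → ℝ := fun x => F x - P x with hudef
  have hFderivc : ContDiff ℝ (⊤ : ℕ∞) (deriv F) := aux_deriv_contDiff hF
  have hvFc : ContDiff ℝ (⊤ : ℕ∞) vF := hρinv.mul hFderivc
  have huc : ContDiff ℝ (⊤ : ℕ∞) u := hF.sub hPc
  have hucont : Continuous u := huc.continuous
  set v : ℝ → ℝ := fun x => vF x - w x with hvdef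
  have hvc : ContDiff ℝ (⊤ : ℕ∞) v := hvFc.sub hwc
  have hvcont : Continuous v := hvc.continuous
  have hdvcont : Continuous (deriv v) := (aux_deriv_contDiff hvc).continuous
  have hducont : Continuous (deriv u) := (aux_deriv_contDiff huc).continuous
  -- u ∈ L²
  have hu2 : MemLp u 2 (volume : Measure ℝ) :=
    hF2.sub (hPc.continuous.memLp_of_hasCompactSupport hPsupp)
  have Iu2 : Integrable (fun x => u x ^ 2) := hu2.integrable_sq
  -- derivative identities
  have hderivu : ∀ x, deriv u x = deriv F x - deriv P x := by
    intro x
    rw [hudef]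
    exact deriv_fun_sub (hF.differentiable (by simp) x) (hPc.differentiable (by simp) x)
  have hderivv : ∀ x, deriv v x = deriv vF x - h x := by
    intro x
    rw [hvdef, hhdef]
    exact deriv_fun_sub (hvFc.differentiable (by simp) x) (hwc.differentiable (by simp) x)
  have hv_eq : ∀ x, v x = (ρ x)⁻¹ * deriv u x := by
    intro x
    rw [hvdef, hvFdef, hwdef, hderivu x]
    simp only
    ring
  -- the key pointwise identity
  have hkey : ∀ x, (ρ x)⁻¹ * u x = α * h x + α * deriv v x := by
    intro x
    have h1 := hEq x
    rw [hderivv x]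
    have h2 : (ρ x)⁻¹ * u x = (ρ x)⁻¹ * F x - g x := by
      rw [hudef, hPdef]
      simp only
      rw [mul_sub, inv_mul_cancel_left₀ (hρne x)]
    rw [h2]
    linarith [h1]
  have hdv_formula : ∀ x, deriv v x = α⁻¹ * ((ρ x)⁻¹ * u x) - h x := by
    intro x
    have h1 := hkey x
    have h2 : α * deriv v x = (ρ x)⁻¹ * u x - α * h x := by linarith
    calc deriv v x = α⁻¹ * (α * deriv v x) := by rw [inv_mul_cancel_left₀ hα.ne']
      _ = α⁻¹ * ((ρ x)⁻¹ * u x) - h x := by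
          rw [h2, mul_sub, inv_mul_cancel_left₀ hα.ne']
  -- quantitative bounds for the boundary-sequence lemma
  set U : ℝ := ∫ x, u x ^ 2 with hUdef
  set Ih : ℝ := ∫ x, |h x| with hIhdef
  have hU0 : 0 ≤ U := integral_nonneg fun x => sq_nonneg _
  have hIhnonneg : 0 ≤ Ih := integral_nonneg fun x => abs_nonneg _
  have hU : ∀ a b : ℝ, a ≤ b → ∫ x in a..b, u x ^ 2 ≤ U := by
    intro a b hab
    rw [intervalIntegral.integral_of_le hab]
    exact setIntegral_le_integral Iu2 (Filter.Eventually.of_forall fun x => sq_nonneg _)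
  have hIh : ∀ a b : ℝ, a ≤ b → ∫ x in a..b, |h x| ≤ Ih := by
    intro a b hab
    rw [intervalIntegral.integral_of_le hab]
    exact setIntegral_le_integral Ihabs (Filter.Eventually.of_forall fun x => abs_nonneg _)
  have hc1 : (0:ℝ) ≤ α⁻¹ * c⁻¹ := by positivity
  have hdvbound : ∀ x, |deriv v x| ≤ α⁻¹ * c⁻¹ * |u x| + |h x| := by
    intro x
    rw [hdv_formula x]
    refine le_trans (abs_sub _ _) ?_
    gcongr
    rw [abs_mul, abs_mul]
    rw [abs_of_pos (inv_pos.mpr hα), abs_of_pos (hρinvpos x)]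
    have h3 : (ρ x)⁻¹ * |u x| ≤ c⁻¹ * |u x| :=
      mul_le_mul_of_nonneg_right (hρinvle x) (abs_nonneg _)
    have hαinv : (0:ℝ) ≤ α⁻¹ := le_of_lt (inv_pos.mpr hα)
    calc α⁻¹ * ((ρ x)⁻¹ * |u x|) ≤ α⁻¹ * (c⁻¹ * |u x|) :=
          mul_le_mul_of_nonneg_left h3 hαinv
      _ = α⁻¹ * c⁻¹ * |u x| := by ring
  have hvHasDeriv : ∀ x : ℝ, HasDerivAt v (deriv v x) x :=
    fun x => (hvc.differentiable (by simp) x).hasDerivAt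
  -- bound |v b| ≤ K1 + K2 √b for b ≥ 1 (both sides)
  set K1 : ℝ := |v 0| + Ih with hK1def
  set K2 : ℝ := α⁻¹ * c⁻¹ * (1 + U) / 2 with hK2def
  have hK1n : 0 ≤ K1 := add_nonneg (abs_nonneg _) hIhnonneg
  have hK2n : 0 ≤ K2 := by positivity
  have hvb_abstract : ∀ a b L : ℝ, a ≤ b → b - a ≤ L → 1 ≤ L →
      |v b - v a| ≤ K2 * Real.sqrt L + Ih := by
    intro a b L hab hba hL1
    have hL0 : (0:ℝ) < L := lt_of_lt_of_le one_pos hL1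
    have hsL : 0 < Real.sqrt L := Real.sqrt_pos.mpr hL0
    have key := aux_vbound v (deriv v) u h hdvcont hucont hhcont hvHasDeriv
      (α⁻¹ * c⁻¹) hc1 hdvbound U Ih hU hIh a b (Real.sqrt L)⁻¹ hab (inv_pos.mpr hsL)
    refine le_trans key ?_
    have h1 : (b - a) * (Real.sqrt L)⁻¹ ≤ Real.sqrt L := by
      have hba' : b - a ≤ Real.sqrt L * Real.sqrt L := by
        rw [Real.mul_self_sqrt (le_of_lt hL0)]; exact hba
      calc (b - a) * (Real.sqrt L)⁻¹ ≤ Real.sqrt L * Real.sqrt L * (Real.sqrt L)⁻¹ :=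
            mul_le_mul_of_nonneg_right hba' (le_of_lt (inv_pos.mpr hsL))
        _ = Real.sqrt L := by field_simp
    have h2 : U / (Real.sqrt L)⁻¹ = U * Real.sqrt L := by field_simp
    rw [h2]
    have h3 : ((b - a) * (Real.sqrt L)⁻¹ + U * Real.sqrt L) / 2 ≤
        (Real.sqrt L + U * Real.sqrt L) / 2 := by linarith
    have h4 := mul_le_mul_of_nonneg_left h3 hc1
    have h5 : α⁻¹ * c⁻¹ * ((Real.sqrt L + U * Real.sqrt L) / 2) = K2 * Real.sqrt L := by
      rw [hK2def]; ring
    linarith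
  have hvbR : ∀ b : ℝ, 1 ≤ b → |v b| ≤ K1 + K2 * Real.sqrt b := by
    intro b hb1
    have hb0 : (0:ℝ) ≤ b := le_trans zero_le_one hb1
    have h1 := hvb_abstract 0 b b hb0 (by linarith) hb1
    have htri : |v b| ≤ |v b - v 0| + |v 0| := by
      calc |v b| = |(v b - v 0) + v 0| := by rw [sub_add_cancel]
        _ ≤ |v b - v 0| + |v 0| := abs_add_le _ _
    rw [hK1def]
    linarith
  have hvbL : ∀ b : ℝ, 1 ≤ b → |v (-b)| ≤ K1 + K2 * Real.sqrt b := by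
    intro b hb1
    have hb0 : (0:ℝ) ≤ b := le_trans zero_le_one hb1
    have h1 := hvb_abstract (-b) 0 b (by linarith) (by linarith) hb1
    rw [abs_sub_comm] at h1
    have htri : |v (-b)| ≤ |v (-b) - v 0| + |v 0| := by
      calc |v (-b)| = |(v (-b) - v 0) + v 0| := by rw [sub_add_cancel]
        _ ≤ |v (-b) - v 0| + |v 0| := abs_add_le _ _
    rw [hK1def]
    linarith
  -- boundary sequences
  obtain ⟨b, hbtop, hb1, hbzero⟩ :=
    aux_bdry_seq u v hucont Iu2 K1 K2 hK1n hK2n hvbR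
  obtain ⟨a', hatop', ha1', hazero'⟩ :=
    aux_bdry_seq (fun x => u (-x)) (fun x => v (-x)) (hucont.comp continuous_neg)
      (by simpa using Iu2.comp_neg) K1 K2 hK1n hK2n (fun b hb => hvbL b hb)
  set a : ℕ → ℝ := fun n => -(a' n) with hadef
  have hatop : Tendsto a atTop atBot := by
    rw [hadef]
    exact tendsto_neg_atBot_iff.mpr hatop'
  have hazero : Tendsto (fun n => v (a n) * u (a n)) atTop (nhds 0) := by
    simpa [hadef] using hazero'
  have ha1 : ∀ n, a n ≤ -1 := by
    intro n
    have := ha1' n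
    rw [hadef]
    simp only
    linarith
  have hab : ∀ n, a n ≤ b n := fun n => le_trans (le_trans (ha1 n) (by norm_num)) (hb1 n)
  -- integrability of ρ⁻¹ u² and h u over ℝ
  have Iρu2 : Integrable (fun x => (ρ x)⁻¹ * u x ^ 2) := by
    apply Integrable.mono' (Iu2.const_mul c⁻¹)
    · exact ((hρinv.continuous).mul (hucont.pow 2)).aestronglyMeasurable
    · refine Filter.Eventually.of_forall fun x => ?_
      rw [Real.norm_eq_abs, abs_of_nonneg (mul_nonneg (hρinvpos x).le (sq_nonneg _))]
      exact mul_le_mul_of_nonneg_right (hρinvle x) (sq_nonneg _)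
  have Ihu : Integrable (fun x => h x * u x) := by
    apply Continuous.integrable_of_hasCompactSupport (hhcont.mul hucont)
    exact hhsupp.mul_right
  -- the energy inequality on [a n, b n]
  have henergy : ∀ n, ∫ x in a n..b n, (ρ x)⁻¹ * u x ^ 2 ≤
      α * (∫ x in a n..b n, h x * u x) + α * (v (b n) * u (b n) - v (a n) * u (a n)) := by
    intro n
    have hAB : a n ≤ b n := hab n
    have hiiu : IntervalIntegrable (fun x => h x * u x) volume (a n) (b n) :=
      (hhcont.mul hucont).intervalIntegrable _ _
    have hiidvu : IntervalIntegrable (fun x => deriv v x * u x) volume (a n) (b n) :=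
      (hdvcont.mul hucont).intervalIntegrable _ _
    have hiivdu : IntervalIntegrable (fun x => v x * deriv u x) volume (a n) (b n) :=
      (hvcont.mul hducont).intervalIntegrable _ _
    have E1 : ∫ x in a n..b n, (ρ x)⁻¹ * u x ^ 2 =
        α * (∫ x in a n..b n, h x * u x) + α * ∫ x in a n..b n, deriv v x * u x := by
      have hcongr : ∀ x, (ρ x)⁻¹ * u x ^ 2 = α * (h x * u x) + α * (deriv v x * u x) := by
        intro x
        have h1 := hkey x
        linear_combination u x * h1
      rw [intervalIntegral.integral_congr
        (g := fun x => α * (h x * u x) + α * (deriv v x * u x)) (fun x _ => hcongr x)]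
      rw [intervalIntegral.integral_add (hiiu.const_mul α) (hiidvu.const_mul α),
        intervalIntegral.integral_const_mul, intervalIntegral.integral_const_mul]
    have E2 : ∫ x in a n..b n, (deriv v x * u x + v x * deriv u x) =
        v (b n) * u (b n) - v (a n) * u (a n) :=
      intervalIntegral.integral_deriv_mul_eq_sub
        (fun x _ => (hvc.differentiable (by simp) x).hasDerivAt)
        (fun x _ => (huc.differentiable (by simp) x).hasDerivAt)
        (hdvcont.intervalIntegrable _ _) (hducont.intervalIntegrable _ _)
    have E2' : ∫ x in a n..b n, deriv v x * u x =
        (v (b n) * u (b n) - v (a n) * u (a n)) - ∫ x in a n..b n, v x * deriv u x := by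
      rw [intervalIntegral.integral_add hiidvu hiivdu] at E2
      linarith
    have E3 : 0 ≤ ∫ x in a n..b n, v x * deriv u x := by
      apply intervalIntegral.integral_nonneg hAB
      intro x _
      rw [hv_eq x]
      have h4 := mul_nonneg (le_of_lt (hρinvpos x)) (mul_self_nonneg (deriv u x))
      calc (0:ℝ) ≤ (ρ x)⁻¹ * (deriv u x * deriv u x) := h4
        _ = (ρ x)⁻¹ * deriv u x * deriv u x := by ring
    rw [E1, E2']
    nlinarith [mul_nonneg hα.le E3]
  -- pass to the limit
  have hLtend : Tendsto (fun n => ∫ x in a n..b n, (ρ x)⁻¹ * u x ^ 2) atTop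
      (nhds (∫ x, (ρ x)⁻¹ * u x ^ 2)) :=
    MeasureTheory.intervalIntegral_tendsto_integral Iρu2 hatop hbtop
  have hhu_tend : Tendsto (fun n => ∫ x in a n..b n, h x * u x) atTop
      (nhds (∫ x, h x * u x)) :=
    MeasureTheory.intervalIntegral_tendsto_integral Ihu hatop hbtop
  have hRtend : Tendsto (fun n => α * (∫ x in a n..b n, h x * u x) +
      α * (v (b n) * u (b n) - v (a n) * u (a n))) atTop
      (nhds (α * (∫ x, h x * u x) + α * (0 - 0))) :=
    (hhu_tend.const_mul α).add ((hbzero.sub hazero).const_mul α)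
  have hfinal1 : ∫ x, (ρ x)⁻¹ * u x ^ 2 ≤ α * ∫ x, h x * u x := by
    have := le_of_tendsto_of_tendsto' hLtend hRtend henergy
    simpa using this
  -- final algebraic estimate
  have hmono1 : U ≤ C * ∫ x, (ρ x)⁻¹ * u x ^ 2 := by
    have hpt : ∀ x, u x ^ 2 ≤ C * ((ρ x)⁻¹ * u x ^ 2) := by
      intro x
      have h1 : (1:ℝ) ≤ C * (ρ x)⁻¹ := by
        calc (1:ℝ) = ρ x * (ρ x)⁻¹ := (mul_inv_cancel₀ (hρne x)).symm
          _ ≤ C * (ρ x)⁻¹ := mul_le_mul_of_nonneg_right (hbound x).2 (hρinvpos x).le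
      nlinarith [sq_nonneg (u x)]
    calc U ≤ ∫ x, C * ((ρ x)⁻¹ * u x ^ 2) :=
          integral_mono Iu2 (Iρu2.const_mul C) hpt
      _ = C * ∫ x, (ρ x)⁻¹ * u x ^ 2 := integral_const_mul C _
  set Y : ℝ := ∫ x, h x ^ 2 with hYdef
  set β : ℝ := α * C with hβdef
  have hβ : 0 < β := mul_pos hα hCpos
  have hpt2 : ∀ x, h x * u x ≤ (β * h x ^ 2 + β⁻¹ * u x ^ 2) / 2 := by
    intro x
    rw [le_div_iff₀ two_pos]
    have key : 2 * (β * (h x * u x)) ≤ β * (β * h x ^ 2) + u x ^ 2 := by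
      nlinarith [sq_nonneg (β * h x - u x)]
    have h5 := mul_le_mul_of_nonneg_left key (inv_pos.mpr hβ).le
    calc h x * u x * 2 = β⁻¹ * (2 * (β * (h x * u x))) := by
          field_simp
      _ ≤ β⁻¹ * (β * (β * h x ^ 2) + u x ^ 2) := h5
      _ = β * h x ^ 2 + β⁻¹ * u x ^ 2 := by field_simp
  have hmono2 : (∫ x, h x * u x) ≤ (β * Y + β⁻¹ * U) / 2 := by
    calc (∫ x, h x * u x) ≤ ∫ x, (β * h x ^ 2 + β⁻¹ * u x ^ 2) / 2 :=
          integral_mono Ihu (((Ih2.const_mul β).add (Iu2.const_mul β⁻¹)).div_const 2) hpt2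
      _ = (β * Y + β⁻¹ * U) / 2 := by
          rw [integral_div, integral_add (Ih2.const_mul β) (Iu2.const_mul β⁻¹),
            integral_const_mul, integral_const_mul]
  have hcomb : U ≤ β ^ 2 * Y := by
    have e1 : U ≤ C * (α * ∫ x, h x * u x) :=
      le_trans hmono1 (mul_le_mul_of_nonneg_left hfinal1 hCpos.le)
    have e2 : α * (∫ x, h x * u x) ≤ α * ((β * Y + β⁻¹ * U) / 2) :=
      mul_le_mul_of_nonneg_left hmono2 hα.le
    have e3 : U ≤ C * (α * ((β * Y + β⁻¹ * U) / 2)) :=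
      le_trans e1 (mul_le_mul_of_nonneg_left e2 hCpos.le)
    have e4 : C * (α * ((β * Y + β⁻¹ * U) / 2)) = (β ^ 2 * Y + U) / 2 := by
      rw [hβdef]
      field_simp
    rw [e4] at e3
    linarith
  have hgoal : Real.sqrt U ≤ α * (C * Real.sqrt Y) := by
    have h1 : Real.sqrt U ≤ Real.sqrt (β ^ 2 * Y) := Real.sqrt_le_sqrt hcomb
    rw [Real.sqrt_mul (sq_nonneg _), Real.sqrt_sq hβ.le] at h1
    calc Real.sqrt U ≤ β * Real.sqrt Y := h1
      _ = α * (C * Real.sqrt Y) := by rw [hβdef]; ring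
  exact hgoal
end
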